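/- Let Φ be a real quadratic form on ℂ^n (viewed as ℝ^{2n}), x₀ ∈ ℂ^n, x₀* ∈ ℂ^n. Then the condition x₀*·x + x₀·(2/i)(∂Φ/∂x)(x) ∈ ℝ for all x ∈ ℂ^n is equivalent to the condition −Φ(x) + Φ(x+x₀) + Re(i x₀*·(x + x₀/2)) = 0 for all x ∈ ℂ^n. -/

import Mathlib

/-!
With `Φ x = B x x`, the first condition says that the real-linear function
`L x = Im (x₀*·x) − 2 B x x₀` vanishes identically, because `x₀·(2/i)∂Φ/∂x(x)` has imaginary part
`−dΦ(x) x₀ = −2 B x x₀`. Expanding `Φ (x + x₀)`, the left-hand side of the second condition is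
`−(L x + L x₀ / 2)`, and taking `x = x₀` shows that this vanishes for all `x` only if `L` does.
-/

/-- The holomorphic partial derivative `∂Φ/∂x_j = (1/2)(∂/∂Re x_j − i ∂/∂Im x_j)Φ`
of a real-valued function `Φ` on `ℂⁿ`. -/
noncomputable def holDeriv (n : ℕ) (Φ : (Fin n → ℂ) → ℝ) (x : Fin n → ℂ)
    (j : Fin n) : ℂ :=
  (2⁻¹ : ℂ) *
    (((fderiv ℝ Φ x (Pi.single j 1) : ℝ) : ℂ) -
      Complex.I * ((fderiv ℝ Φ x (Pi.single j Complex.I) : ℝ) : ℂ))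

open Complex

theorem fderiv_apply_self_apply_self {𝕜 E F : Type*} [NontriviallyNormedField 𝕜]
    [CompleteSpace 𝕜] [NormedAddCommGroup E] [NormedSpace 𝕜 E] [FiniteDimensional 𝕜 E]
    [NormedAddCommGroup F] [NormedSpace 𝕜 F] (B : E →ₗ[𝕜] E →ₗ[𝕜] F) (x v : E) :
    fderiv 𝕜 (fun y => B y y) x v = B x v + B v x := by
  let Bc : E →L[𝕜] E →L[𝕜] F :=
    LinearMap.toContinuousLinearMap (LinearMap.toContinuousLinearMap.toLinearMap ∘ₗ B)
  have hB : HasFDerivAt (fun y => Bc y y) _ x :=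
    Bc.hasFDerivAt_of_bilinear (hasFDerivAt_id x) (hasFDerivAt_id x)
  change fderiv 𝕜 (fun y => Bc y y) x v = _
  rw [hB.fderiv]
  simp [Bc]

theorem re_sum_mul_apply_single_sub_I_mul {n : ℕ} (ℓ : (Fin n → ℂ) →ₗ[ℝ] ℝ) (v : Fin n → ℂ) :
    (∑ j, v j * (ℓ (Pi.single j 1) - I * ℓ (Pi.single j I))).re = ℓ v := by
  have hsingle : ∀ j, (Pi.single j (v j) : Fin n → ℂ) =
      (v j).re • (Pi.single j 1 : Fin n → ℂ) + (v j).im • (Pi.single j I : Fin n → ℂ) := by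
    intro j
    rw [← Pi.single_smul, ← Pi.single_smul, ← Pi.single_add, real_smul, real_smul, mul_one,
      re_add_im]
  conv_rhs => rw [← Finset.univ_sum_single v]
  simp [hsingle, re_sum]

theorem im_sum_mul_two_div_I_mul_holDeriv {n : ℕ} (Φ : (Fin n → ℂ) → ℝ) (x v : Fin n → ℂ) :
    (∑ j, v j * ((2 / I) * holDeriv n Φ x j)).im = -fderiv ℝ Φ x v := by
  have h := re_sum_mul_apply_single_sub_I_mul (fderiv ℝ Φ x).toLinearMap v
  have hterm : ∀ j, v j * ((2 / I) * holDeriv n Φ x j) =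
      -I * (v j * (fderiv ℝ Φ x (Pi.single j 1) - I * fderiv ℝ Φ x (Pi.single j I))) := by
    intro j
    rw [holDeriv, div_I]
    ring
  simp only [hterm]
  rw [← Finset.mul_sum]
  simpa using h

theorem forall_eq_zero_iff_forall_add_half_eq_zero {α : Type*} (L : α → ℝ) (x₀ : α) :
    (∀ x, L x = 0) ↔ ∀ x, L x + L x₀ / 2 = 0 := by
  refine ⟨fun h x => by simp [h], fun h x => ?_⟩
  have h₀ : L x₀ = 0 := by linarith [h x₀]
  linarith [h x]

/-- For a real quadratic form `Φ` on `ℂⁿ` and `x₀, x₀* ∈ ℂⁿ`, the condition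
`x₀*·x + x₀·(2/i)(∂Φ/∂x)(x) ∈ ℝ` for all `x` is equivalent to
`−Φ(x) + Φ(x+x₀) + Re(i x₀*·(x + x₀/2)) = 0` for all `x`. -/
theorem stmt18 (n : ℕ) (Φ : (Fin n → ℂ) → ℝ)
    (B : (Fin n → ℂ) →ₗ[ℝ] (Fin n → ℂ) →ₗ[ℝ] ℝ)
    (hBsymm : ∀ x y, B x y = B y x) (hΦ : ∀ x, Φ x = B x x)
    (x₀ xs₀ : Fin n → ℂ) :
    (∀ x : Fin n → ℂ,
        (∑ j, xs₀ j * x j +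
            ∑ j, x₀ j * ((2 / Complex.I) * holDeriv n Φ x j)).im = 0) ↔
      (∀ x : Fin n → ℂ,
        -Φ x + Φ (x + x₀) + (Complex.I * ∑ j, xs₀ j * (x j + x₀ j / 2)).re = 0) := by
  let L x := (∑ j, xs₀ j * x j).im - 2 * B x x₀
  have hdΦ : ∀ x, fderiv ℝ Φ x x₀ = 2 * B x x₀ := fun x => by
    rw [funext hΦ, fderiv_apply_self_apply_self, hBsymm x₀ x, two_mul]
  have hlhs : ∀ x, (∑ j, xs₀ j * x j +
      ∑ j, x₀ j * ((2 / I) * holDeriv n Φ x j)).im = L x := fun x => by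
    rw [add_im, im_sum_mul_two_div_I_mul_holDeriv, hdΦ, ← sub_eq_add_neg]
  have hrhs : ∀ x, -Φ x + Φ (x + x₀) + (I * ∑ j, xs₀ j * (x j + x₀ j / 2)).re =
      -(L x + L x₀ / 2) := fun x => by
    have hsum : ∑ j, xs₀ j * (x j + x₀ j / 2) = ∑ j, xs₀ j * x j + (∑ j, xs₀ j * x₀ j) / 2 := by
      simp only [mul_add, Finset.sum_add_distrib, Finset.sum_div, mul_div_assoc]
    rw [hΦ, hΦ, hsum, I_mul_re, add_im, div_ofNat_im]
    simp only [map_add, LinearMap.add_apply, hBsymm x₀ x, L]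
    ring
  simp only [hlhs, hrhs, neg_eq_zero]
  exact forall_eq_zero_iff_forall_add_half_eq_zero L x₀
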